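/- Assume the project is PCL-indexable, i.e., conditions (PCLI1), (PCLI2) and (PCLI3) hold. Then for every initial distribution p on ℝ with ∫ w dp < ∞, the MP index m* is integrable with respect to the Lebesgue–Stieltjes measure ν_{G(p,·)}: ∫_ℝ |m*| dν_{G(p,·)} < ∞. -/

import Mathlib

open MeasureTheory ProbabilityTheory Filter Topology Set

noncomputable section

/-- A restless bandit project: the model data (discount factor `β`, passive/active
Markov transition kernels `κ false`/`κ true`, reward `r` and resource consumption `c`),
Assumption 1 (the weighted sup-norm conditions for weight `w` and constants `M`, `γ`),
together with the threshold-policy performance metrics `F`, `G` (for `z`-policies,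
active iff `x > z`), `Fm`, `Gm` (for `z⁻`-policies, active iff `x ≥ z`), and the
optimal value function `V lam` of the `lam`-price problem, each of which is the
(unique) `w`-bounded measurable solution of its fixed-point equation. -/
structure Bandit where
  β : ℝ
  κ : Bool → Kernel ℝ ℝ
  r : ℝ → Bool → ℝ
  c : ℝ → Bool → ℝ
  w : ℝ → ℝ
  M : ℝ
  γ : ℝ
  F : ℝ → EReal → ℝ
  G : ℝ → EReal → ℝ
  Fm : ℝ → EReal → ℝ
  Gm : ℝ → EReal → ℝ
  V : ℝ → ℝ → ℝ
  hβ0 : 0 ≤ β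
  hβ1 : β < 1
  hκ : ∀ a, IsMarkovKernel (κ a)
  hr_cont : ∀ a, Continuous fun x => r x a
  hc_cont : ∀ a, Continuous fun x => c x a
  hc0 : ∀ x, 0 ≤ c x false
  hc01 : ∀ x, c x false < c x true
  hw_meas : Measurable w
  hw_one : ∀ x, 1 ≤ w x
  hM : 0 < M
  hβγ : β ≤ γ
  hγ1 : γ < 1
  hr_bd : ∀ x a, |r x a| ≤ M * w x
  hc_bd : ∀ x a, c x a ≤ M * w x
  hw_int : ∀ a x, Integrable w (κ a x)
  hw_drift : ∀ a x, β * ∫ y, w y ∂(κ a x) ≤ γ * w x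
  hF_meas : ∀ z, Measurable fun x => F x z
  hG_meas : ∀ z, Measurable fun x => G x z
  hFm_meas : ∀ z, Measurable fun x => Fm x z
  hGm_meas : ∀ z, Measurable fun x => Gm x z
  hV_meas : ∀ lam, Measurable (V lam)
  hF_bdd : ∀ z, ∃ C, ∀ x, |F x z| ≤ C * w x
  hG_bdd : ∀ z, ∃ C, ∀ x, |G x z| ≤ C * w x
  hFm_bdd : ∀ z, ∃ C, ∀ x, |Fm x z| ≤ C * w x
  hGm_bdd : ∀ z, ∃ C, ∀ x, |Gm x z| ≤ C * w x
  hV_bdd : ∀ lam, ∃ C, ∀ x, |V lam x| ≤ C * w x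
  hF_eq : ∀ x z, F x z =
    r x (decide (z < (x : EReal))) +
      β * ∫ y, F y z ∂(κ (decide (z < (x : EReal))) x)
  hG_eq : ∀ x z, G x z =
    c x (decide (z < (x : EReal))) +
      β * ∫ y, G y z ∂(κ (decide (z < (x : EReal))) x)
  hFm_eq : ∀ x z, Fm x z =
    r x (decide (z ≤ (x : EReal))) +
      β * ∫ y, Fm y z ∂(κ (decide (z ≤ (x : EReal))) x)
  hGm_eq : ∀ x z, Gm x z =
    c x (decide (z ≤ (x : EReal))) +
      β * ∫ y, Gm y z ∂(κ (decide (z ≤ (x : EReal))) x)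
  hV_eq : ∀ lam x, V lam x =
    max (r x false - lam * c x false + β * ∫ y, V lam y ∂(κ false x))
        (r x true - lam * c x true + β * ∫ y, V lam y ∂(κ true x))

/-- `ν` is the Lebesgue–Stieltjes measure of the (bounded nonincreasing
right-continuous) function `h`: `ν(z₁,z₂] = h z₁ - h z₂`. -/
def IsLSMeasureOfAnti (h : ℝ → ℝ) (ν : Measure ℝ) : Prop :=
  ∀ z₁ z₂ : ℝ, z₁ ≤ z₂ → ν (Set.Ioc z₁ z₂) = ENNReal.ofReal (h z₁ - h z₂)

/-- `ν` is the Lebesgue–Stieltjes measure of the (bounded nondecreasing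
right-continuous) function `h`: `ν(z₁,z₂] = h z₂ - h z₁`. -/
def IsLSMeasureOfMono (h : ℝ → ℝ) (ν : Measure ℝ) : Prop :=
  ∀ z₁ z₂ : ℝ, z₁ ≤ z₂ → ν (Set.Ioc z₁ z₂) = ENNReal.ofReal (h z₂ - h z₁)

/-- The real interval `(z₁, z₂] ⊆ ℝ` with extended-real endpoints. -/
def iocR (z₁ z₂ : EReal) : Set ℝ := {y : ℝ | z₁ < (y : EReal) ∧ (y : EReal) ≤ z₂}

/-- `t`-step distribution of the Markov chain with kernel `κ` and initial law `p`. -/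
def kerIter (κ : Kernel ℝ ℝ) : ℕ → Measure ℝ → Measure ℝ
  | 0, p => p
  | (t + 1), p => (kerIter κ t p).bind fun x => κ x

namespace Bandit

variable (P : Bandit)

/-- Marginal reward metric `f(x,z)` of the `z`-policy. -/
def f (x : ℝ) (z : EReal) : ℝ :=
  (P.r x true - P.r x false) +
    P.β * ((∫ y, P.F y z ∂(P.κ true x)) - ∫ y, P.F y z ∂(P.κ false x))

/-- Marginal resource metric `g(x,z)` of the `z`-policy. -/
def g (x : ℝ) (z : EReal) : ℝ :=
  (P.c x true - P.c x false) +
    P.β * ((∫ y, P.G y z ∂(P.κ true x)) - ∫ y, P.G y z ∂(P.κ false x))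

/-- Marginal reward metric `f(x,z⁻)` of the `z⁻`-policy. -/
def fm (x : ℝ) (z : EReal) : ℝ :=
  (P.r x true - P.r x false) +
    P.β * ((∫ y, P.Fm y z ∂(P.κ true x)) - ∫ y, P.Fm y z ∂(P.κ false x))

/-- Marginal resource metric `g(x,z⁻)` of the `z⁻`-policy. -/
def gm (x : ℝ) (z : EReal) : ℝ :=
  (P.c x true - P.c x false) +
    P.β * ((∫ y, P.Gm y z ∂(P.κ true x)) - ∫ y, P.Gm y z ∂(P.κ false x))

/-- Marginal productivity metric `m(x,z) = f(x,z)/g(x,z)`. -/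
def m (x : ℝ) (z : EReal) : ℝ := P.f x z / P.g x z

/-- Marginal productivity metric `m(x,z⁻) = f(x,z⁻)/g(x,z⁻)`. -/
def mm (x : ℝ) (z : EReal) : ℝ := P.fm x z / P.gm x z

/-- The marginal productivity (MP) index `m*(x) = m(x,x)`. -/
def mStar (x : ℝ) : ℝ := P.m x (x : EReal)

/-- The active action is `P_lam`-optimal at `x`. -/
def ActOpt (lam x : ℝ) : Prop :=
  P.r x false - lam * P.c x false + P.β * ∫ y, P.V lam y ∂(P.κ false x) ≤
    P.r x true - lam * P.c x true + P.β * ∫ y, P.V lam y ∂(P.κ true x)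

/-- The passive action is `P_lam`-optimal at `x`. -/
def PassOpt (lam x : ℝ) : Prop :=
  P.r x true - lam * P.c x true + P.β * ∫ y, P.V lam y ∂(P.κ true x) ≤
    P.r x false - lam * P.c x false + P.β * ∫ y, P.V lam y ∂(P.κ false x)

/-- The project is indexable with index `ν`. -/
def Indexable (ν : ℝ → ℝ) : Prop :=
  ∀ lam x, (P.ActOpt lam x ↔ lam ≤ ν x) ∧ (P.PassOpt lam x ↔ ν x ≤ lam)

/-- The `z`-policy is `P_lam`-optimal. -/
def ZPolicyOpt (z : EReal) (lam : ℝ) : Prop :=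
  ∀ x, P.F x z - lam * P.G x z = P.V lam x

/-- The `z⁻`-policy is `P_lam`-optimal. -/
def ZmPolicyOpt (z : EReal) (lam : ℝ) : Prop :=
  ∀ x, P.Fm x z - lam * P.Gm x z = P.V lam x

/-- The project is strongly threshold-indexable with index `ν`. -/
def StronglyThresholdIndexable (ν : ℝ → ℝ) : Prop :=
  P.Indexable ν ∧
    ∀ lam : ℝ, ∃ z : EReal, P.ZPolicyOpt z lam ∧ P.ZmPolicyOpt z lam

/-- PCL-indexability condition (PCLI1). -/
def PCLI1 : Prop := ∀ (x : ℝ) (z : EReal), 0 < P.g x z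

/-- PCL-indexability condition (PCLI2). -/
def PCLI2 : Prop :=
  Monotone P.mStar ∧ Continuous P.mStar ∧ BddBelow (Set.range P.mStar)

/-- PCL-indexability condition (PCLI3). -/
def PCLI3 : Prop :=
  ∀ x : ℝ, ∀ ν : Measure ℝ, IsLSMeasureOfAnti (fun z : ℝ => P.G x z) ν →
    ∀ z₁ z₂ : ℝ, z₁ < z₂ →
      P.F x z₂ - P.F x z₁ = -∫ z in Set.Ioc z₁ z₂, P.mStar z ∂ν

/-- The project is PCL-indexable. -/
def PCLIndexable : Prop := P.PCLI1 ∧ P.PCLI2 ∧ P.PCLI3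

/-- Reward metric with initial distribution `p`. -/
def Fp (p : Measure ℝ) (z : EReal) : ℝ := ∫ x, P.F x z ∂p

/-- Resource metric with initial distribution `p`. -/
def Gp (p : Measure ℝ) (z : EReal) : ℝ := ∫ x, P.G x z ∂p

/-- `z⁻`-policy reward metric with initial distribution `p`. -/
def Fmp (p : Measure ℝ) (z : EReal) : ℝ := ∫ x, P.Fm x z ∂p

/-- `z⁻`-policy resource metric with initial distribution `p`. -/
def Gmp (p : Measure ℝ) (z : EReal) : ℝ := ∫ x, P.Gm x z ∂p

/-- An admissible initial distribution: a probability measure with `∫ w dp < ∞`. -/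
def IsInitDist (p : Measure ℝ) : Prop :=
  IsProbabilityMeasure p ∧ Integrable P.w p

/-- The transition kernel of the `z`-policy (active iff `x > z`). -/
def thrKer (z : EReal) : Kernel ℝ ℝ :=
  haveI : DecidablePred (· ∈ {x : ℝ | z < (x : EReal)}) := Classical.decPred _
  Kernel.piecewise
    (show MeasurableSet {x : ℝ | z < (x : EReal)} from
      measurable_coe_real_ereal measurableSet_Ioi)
    (P.κ true) (P.κ false)

/-- The transition kernel of the `z⁻`-policy (active iff `x ≥ z`). -/
def thrKerM (z : EReal) : Kernel ℝ ℝ :=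
  haveI : DecidablePred (· ∈ {x : ℝ | z ≤ (x : EReal)}) := Classical.decPred _
  Kernel.piecewise
    (show MeasurableSet {x : ℝ | z ≤ (x : EReal)} from
      measurable_coe_real_ereal measurableSet_Ici)
    (P.κ true) (P.κ false)

/-- The (discounted) state occupation measure `μ_p^z` of the `z`-policy. -/
def occ (z : EReal) (p : Measure ℝ) : Measure ℝ :=
  Measure.sum fun t : ℕ => ENNReal.ofReal (P.β ^ t) • kerIter (P.thrKer z) t p

/-- The (discounted) state occupation measure `μ_p^{z⁻}` of the `z⁻`-policy. -/
def occM (z : EReal) (p : Measure ℝ) : Measure ℝ :=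
  Measure.sum fun t : ℕ => ENNReal.ofReal (P.β ^ t) • kerIter (P.thrKerM z) t p

end Bandit

/-- Finite-horizon reward metric `F_k(x,z)` (value iteration). -/
def Bandit.Fk (P : Bandit) : ℕ → ℝ → EReal → ℝ
  | 0, x, z => P.r x (decide (z < (x : EReal)))
  | (k + 1), x, z =>
      P.r x (decide (z < (x : EReal))) +
        P.β * ∫ y, Bandit.Fk P k y z ∂(P.κ (decide (z < (x : EReal))) x)

/-- Finite-horizon resource metric `G_k(x,z)` (value iteration). -/
def Bandit.Gk (P : Bandit) : ℕ → ℝ → EReal → ℝ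
  | 0, x, z => P.c x (decide (z < (x : EReal)))
  | (k + 1), x, z =>
      P.c x (decide (z < (x : EReal))) +
        P.β * ∫ y, Bandit.Gk P k y z ∂(P.κ (decide (z < (x : EReal))) x)

/-- Finite-horizon marginal reward metric `f_k(x,z)`. -/
def Bandit.fk (P : Bandit) : ℕ → ℝ → EReal → ℝ
  | 0, x, _ => P.r x true - P.r x false
  | (k + 1), x, z =>
      (P.r x true - P.r x false) +
        P.β * ((∫ y, P.Fk k y z ∂(P.κ true x)) - ∫ y, P.Fk k y z ∂(P.κ false x))

/-- Finite-horizon marginal resource metric `g_k(x,z)`. -/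
def Bandit.gk (P : Bandit) : ℕ → ℝ → EReal → ℝ
  | 0, x, _ => P.c x true - P.c x false
  | (k + 1), x, z =>
      (P.c x true - P.c x false) +
        P.β * ((∫ y, P.Gk k y z ∂(P.κ true x)) - ∫ y, P.Gk k y z ∂(P.κ false x))

namespace Bandit

variable (P : Bandit)

/-- Finite-horizon MP metric `m_k(x,z)`. -/
def mk' (k : ℕ) (x : ℝ) (z : EReal) : ℝ := P.fk k x z / P.gk k x z

/-- Finite-horizon MP index `m*_k(x)`. -/
def mkStar (k : ℕ) (x : ℝ) : ℝ := P.mk' k x (x : EReal)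

/-- `g̲(x,z) = inf_k g_k(x,z)`. -/
def gbar (x : ℝ) (z : EReal) : ℝ := ⨅ k : ℕ, P.gk k x z

end Bandit

/-!
Integrating `m*(s) ≤ m*` over `(s, t]` in the PCLI3 identity gives
`m*(s) (G(x,s) - G(x,t)) ≤ F(x,s) - F(x,t)`, and averaging over `p` gives the same inequality
for `G(p,·)` and `F(p,·)`. Cutting `(a, b]` into pieces on which `m*` oscillates by less than `1`,
and using `m* ≥ -L`, the `ν`-integral of `|m*|` over `(a, b]` is at most the decrement of the
antitone function `F(p,·) + (1 + 2L) G(p,·)`, which is bounded because all metrics are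
`w`-bounded with a constant independent of the threshold.

PCLI3 can only be invoked with a Lebesgue–Stieltjes measure of `G(x,·)`, so one must show that
`G(x,·)` is nonincreasing (from PCLI1) and right-continuous. Both follow from the fixed-point
equation satisfied by `G(·,z₁) - G(·,z₂)`, through the comparison principle of the discounted
operator.
-/

theorem setLIntegral_Ioc_le_of_forall_sub_lt {ν : Measure ℝ} {f : ℝ → ENNReal} {Φ : ℝ → ℝ}
    (hΦ : Antitone Φ) {a b δ : ℝ} (hδ : 0 < δ)
    (hloc : ∀ s t, a ≤ s → s ≤ t → t ≤ b → t - s < δ →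
      ∫⁻ z in Ioc s t, f z ∂ν ≤ ENNReal.ofReal (Φ s - Φ t)) :
    ∫⁻ z in Ioc a b, f z ∂ν ≤ ENNReal.ofReal (Φ a - Φ b) := by
  have grid : ∀ n : ℕ, ∀ t, a ≤ t → t ≤ b → t ≤ a + n * (δ / 2) →
      ∫⁻ z in Ioc a t, f z ∂ν ≤ ENNReal.ofReal (Φ a - Φ t) := by
    intro n
    induction n with
    | zero =>
      intro t hat _ ht
      obtain rfl : t = a := by simp only [CharP.cast_eq_zero, zero_mul, add_zero] at ht; linarith
      simp
    | succ n ih =>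
      intro t hat htb ht
      by_cases htn : t ≤ a + n * (δ / 2)
      · exact ih t hat htb htn
      set s := a + n * (δ / 2) with hs
      have has : a ≤ s := le_add_of_nonneg_right (by positivity)
      have hst : s ≤ t := (not_le.mp htn).le
      rw [← Ioc_union_Ioc_eq_Ioc has hst,
        lintegral_union measurableSet_Ioc (Ioc_disjoint_Ioc_of_le le_rfl)]
      calc _ ≤ ENNReal.ofReal (Φ a - Φ s) + ENNReal.ofReal (Φ s - Φ t) :=
            add_le_add (ih s has (hst.trans htb) le_rfl)
              (hloc s t has hst htb (by push_cast at ht; linarith [hs]))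
        _ = ENNReal.ofReal (Φ a - Φ t) := by
            rw [← ENNReal.ofReal_add (sub_nonneg.mpr (hΦ has)) (sub_nonneg.mpr (hΦ hst))]
            ring_nf
  rcases le_or_gt a b with hab | hab
  · obtain ⟨n, hn⟩ := exists_nat_ge ((b - a) / (δ / 2))
    rw [div_le_iff₀ (by positivity)] at hn
    exact grid n b hab le_rfl (by linarith)
  · simp [Ioc_eq_empty_of_le hab.le]

theorem lintegral_le_of_forall_setLIntegral_Ioc_le {ν : Measure ℝ} {f : ℝ → ENNReal}
    {C : ENNReal} (h : ∀ a b, ∫⁻ z in Ioc a b, f z ∂ν ≤ C) : ∫⁻ z, f z ∂ν ≤ C := by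
  have hunion : ⋃ n : ℕ, Ioc (-(n : ℝ)) n = univ := by
    refine eq_univ_of_forall fun z => mem_iUnion.mpr ?_
    obtain ⟨n, hn⟩ := exists_nat_gt |z|
    exact ⟨n, by linarith [neg_abs_le z], by linarith [le_abs_self z]⟩
  have hmono : Monotone fun n : ℕ => Ioc (-(n : ℝ)) n := fun m n hmn =>
    Ioc_subset_Ioc (by simpa using hmn) (by simpa using hmn)
  rw [← setLIntegral_univ, ← hunion, setLIntegral_iUnion_of_directed _ hmono.directed_le]
  exact iSup_le fun n => h _ _

theorem tendsto_add_one_div_add_one_nhdsGT (z : ℝ) :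
    Tendsto (fun k : ℕ => z + 1 / ((k : ℝ) + 1)) atTop (𝓝[>] z) :=
  tendsto_nhdsWithin_iff.mpr
    ⟨by simpa only [add_zero] using tendsto_one_div_add_atTop_nhds_zero_nat.const_add z,
      Eventually.of_forall fun k => lt_add_of_pos_right z (by positivity)⟩

namespace Bandit

variable (P : Bandit)

section FixedPoint

variable {σ : ℝ → Bool} {u b : ℝ → ℝ}

lemma w_pos (x : ℝ) : 0 < P.w x := one_pos.trans_le (P.hw_one x)

lemma integrable_of_abs_le_mul_w {μ : Measure ℝ} (hw : Integrable P.w μ) (hu : Measurable u)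
    {C : ℝ} (hC : ∀ x, |u x| ≤ C * P.w x) : Integrable u μ :=
  (hw.const_mul C).mono' hu.aestronglyMeasurable (ae_of_all _ hC)

/-- Comparison principle for the discounted operator `v ↦ B w + β ∫ v dκ^σ`: by the drift
bound `β ∫ w dκ ≤ γ w`, each iteration of the inequality shrinks the excess of `u` over
`B / (1 - γ) w` by the factor `γ`. -/
lemma le_div_mul_w_of_le_add_discounted {B : ℝ} (hB : 0 ≤ B) (hu : Measurable u)
    (hbdd : ∃ C, ∀ x, |u x| ≤ C * P.w x)
    (h : ∀ x, u x ≤ B * P.w x + P.β * ∫ y, u y ∂(P.κ (σ x) x)) (x : ℝ) :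
    u x ≤ B / (1 - P.γ) * P.w x := by
  obtain ⟨C, hC⟩ := hbdd
  set K := B / (1 - P.γ)
  set E := max (C - K) 0
  have hγ0 : 0 ≤ P.γ := P.hβ0.trans P.hβγ
  have hK : B + P.γ * K = K := by
    have : 1 - P.γ ≠ 0 := by linarith [P.hγ1]
    simp only [K]; field_simp; ring
  have hK0 : 0 ≤ K := div_nonneg hB (by linarith [P.hγ1])
  have hE0 : 0 ≤ E := le_max_right _ _
  have key : ∀ n : ℕ, ∀ x, u x ≤ (K + E * P.γ ^ n) * P.w x := by
    intro n
    induction n with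
    | zero =>
      intro x
      have : C ≤ K + E * P.γ ^ 0 := by
        simp only [pow_zero, mul_one]; linarith [le_max_left (C - K) 0]
      exact (le_abs_self _).trans
        ((hC x).trans (mul_le_mul_of_nonneg_right this (P.w_pos x).le))
    | succ n ih =>
      intro x
      have hcoef : 0 ≤ K + E * P.γ ^ n := by positivity
      have hint := P.integrable_of_abs_le_mul_w (P.hw_int (σ x) x) hu hC
      calc u x ≤ B * P.w x + P.β * ∫ y, u y ∂(P.κ (σ x) x) := h x
        _ ≤ B * P.w x + P.β * ∫ y, (K + E * P.γ ^ n) * P.w y ∂(P.κ (σ x) x) := by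
          have := integral_mono hint ((P.hw_int (σ x) x).const_mul (K + E * P.γ ^ n)) ih
          exact add_le_add_right (mul_le_mul_of_nonneg_left this P.hβ0) _
        _ = B * P.w x + (K + E * P.γ ^ n) * (P.β * ∫ y, P.w y ∂(P.κ (σ x) x)) := by
          rw [integral_const_mul]; ring
        _ ≤ B * P.w x + (K + E * P.γ ^ n) * (P.γ * P.w x) := by
          exact add_le_add_right (mul_le_mul_of_nonneg_left (P.hw_drift (σ x) x) hcoef) _
        _ = (K + E * P.γ ^ (n + 1)) * P.w x := by linear_combination P.w x * hK
  have hlim : Tendsto (fun n : ℕ => (K + E * P.γ ^ n) * P.w x) atTop (𝓝 (K * P.w x)) := by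
    simpa using (((tendsto_pow_atTop_nhds_zero_of_lt_one hγ0 P.hγ1).const_mul E).const_add K
      |>.mul_const (P.w x))
  exact ge_of_tendsto' hlim (fun n => key n x)

lemma nonneg_of_eq_add_discounted (hu : Measurable u) (hbdd : ∃ C, ∀ x, |u x| ≤ C * P.w x)
    (hb : ∀ x, 0 ≤ b x) (heq : ∀ x, u x = b x + P.β * ∫ y, u y ∂(P.κ (σ x) x)) (x : ℝ) :
    0 ≤ u x := by
  have hneg := P.le_div_mul_w_of_le_add_discounted (u := fun y => -u y) le_rfl hu.neg
    (by simpa only [abs_neg] using hbdd)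
    (fun x => by rw [integral_neg]; linarith [heq x, hb x]) x
  simp only [zero_div, zero_mul] at hneg
  linarith

lemma abs_le_of_eq_add_discounted {B : ℝ} (hu : Measurable u)
    (hbdd : ∃ C, ∀ x, |u x| ≤ C * P.w x) (hb : ∀ x, |b x| ≤ B * P.w x)
    (heq : ∀ x, u x = b x + P.β * ∫ y, u y ∂(P.κ (σ x) x)) (x : ℝ) :
    |u x| ≤ B / (1 - P.γ) * P.w x := by
  have hB : 0 ≤ B :=
    (mul_nonneg_iff_of_pos_right (P.w_pos 0)).mp ((abs_nonneg _).trans (hb 0))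
  refine abs_le'.mpr ⟨P.le_div_mul_w_of_le_add_discounted hB hu hbdd
    (fun x => (heq x).trans_le (by linarith [le_abs_self (b x), hb x])) x, ?_⟩
  refine P.le_div_mul_w_of_le_add_discounted (σ := σ) (u := fun y => -u y) hB hu.neg
    (by simpa only [abs_neg] using hbdd) (fun x => ?_) x
  rw [integral_neg]
  linarith [heq x, neg_abs_le (b x), hb x]

lemma eq_add_discounted_of_tendsto {D bk : ℕ → ℝ → ℝ} (hD : ∀ k, Measurable (D k))
    {C : ℝ} (hC : ∀ k x, |D k x| ≤ C * P.w x)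
    (heq : ∀ k x, D k x = bk k x + P.β * ∫ y, D k y ∂(P.κ (σ x) x))
    (hDu : ∀ x, Tendsto (D · x) atTop (𝓝 (u x))) (hb : ∀ x, Tendsto (bk · x) atTop (𝓝 (b x)))
    (x : ℝ) : u x = b x + P.β * ∫ y, u y ∂(P.κ (σ x) x) := by
  have hint : Tendsto (fun k => ∫ y, D k y ∂(P.κ (σ x) x)) atTop
      (𝓝 (∫ y, u y ∂(P.κ (σ x) x))) :=
    tendsto_integral_of_dominated_convergence (fun y => C * P.w y)
      (fun k => (hD k).aestronglyMeasurable) ((P.hw_int _ x).const_mul C)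
      (fun k => ae_of_all _ (hC k)) (ae_of_all _ hDu)
  exact tendsto_nhds_unique (hDu x)
    (((hb x).add (hint.const_mul _)).congr fun k => (heq k x).symm)

end FixedPoint

lemma c_nonneg (x : ℝ) (a : Bool) : 0 ≤ P.c x a := by
  cases a
  · exact P.hc0 x
  · exact (P.hc0 x).trans (P.hc01 x).le

lemma abs_F_le (z : EReal) (x : ℝ) : |P.F x z| ≤ P.M / (1 - P.γ) * P.w x :=
  P.abs_le_of_eq_add_discounted (P.hF_meas z) (P.hF_bdd z) (fun x => P.hr_bd x _)
    (fun x => P.hF_eq x z) x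

lemma abs_G_le (z : EReal) (x : ℝ) : |P.G x z| ≤ P.M / (1 - P.γ) * P.w x :=
  P.abs_le_of_eq_add_discounted (P.hG_meas z) (P.hG_bdd z)
    (fun x => (abs_of_nonneg (P.c_nonneg x _)).trans_le (P.hc_bd x _))
    (fun x => P.hG_eq x z) x

lemma abs_G_sub_G_le (z₁ z₂ : EReal) (x : ℝ) :
    |P.G x z₁ - P.G x z₂| ≤ 2 * (P.M / (1 - P.γ)) * P.w x := by
  linarith [abs_sub (P.G x z₁) (P.G x z₂), P.abs_G_le z₁ x, P.abs_G_le z₂ x]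

lemma integrable_G {μ : Measure ℝ} (hw : Integrable P.w μ) (z : EReal) :
    Integrable (fun x => P.G x z) μ :=
  P.integrable_of_abs_le_mul_w hw (P.hG_meas z) (P.abs_G_le z)

lemma integrable_F {μ : Measure ℝ} (hw : Integrable P.w μ) (z : EReal) :
    Integrable (fun x => P.F x z) μ :=
  P.integrable_of_abs_le_mul_w hw (P.hF_meas z) (P.abs_F_le z)

/-- The `z₁`- and `z₂`-policies differ only on `(z₁, z₂]`, where the first is active and the
second passive; there, comparing both with `G(·, z₂)` after one step leaves exactly `g(x, z₂)`. -/
lemma G_sub_G_eq {z₁ z₂ : ℝ} (h : z₁ ≤ z₂) (x : ℝ) :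
    P.G x z₁ - P.G x z₂ = (Ioc z₁ z₂).indicator (fun y => P.g y z₂) x +
      P.β * ∫ y, (P.G y z₁ - P.G y z₂) ∂(P.κ (decide ((z₁ : EReal) < x)) x) := by
  have e₁ := P.hG_eq x z₁
  have e₂ := P.hG_eq x z₂
  simp only [EReal.coe_lt_coe_iff] at e₁ e₂ ⊢
  by_cases h₁ : z₁ < x
  · rw [integral_sub (P.integrable_G (P.hw_int _ x) _) (P.integrable_G (P.hw_int _ x) _)]
    by_cases h₂ : z₂ < x
    · rw [indicator_of_notMem (fun hx => (not_le.mpr h₂) hx.2)]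
      simp only [h₁, h₂, decide_true] at e₁ e₂ ⊢
      rw [e₁, e₂]; ring
    · rw [indicator_of_mem (show x ∈ Ioc z₁ z₂ from ⟨h₁, not_lt.mp h₂⟩)]
      simp only [h₁, h₂, decide_true, decide_false] at e₁ e₂ ⊢
      rw [e₁, e₂, g]; ring
  · have h₂ : ¬ z₂ < x := fun h₂ => h₁ (h.trans_lt h₂)
    rw [integral_sub (P.integrable_G (P.hw_int _ x) _) (P.integrable_G (P.hw_int _ x) _),
      indicator_of_notMem (fun hx => h₁ hx.1)]
    simp only [h₁, h₂, decide_false] at e₁ e₂ ⊢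
    rw [e₁, e₂]; ring

lemma G_antitone (h₁ : P.PCLI1) (x : ℝ) : Antitone fun z : ℝ => P.G x z := by
  intro z₁ z₂ h
  have := P.nonneg_of_eq_add_discounted (u := fun y => P.G y z₁ - P.G y z₂)
    ((P.hG_meas _).sub (P.hG_meas _))
    ⟨_, P.abs_G_sub_G_le z₁ z₂⟩ (indicator_nonneg fun y _ => (h₁ y _).le) (P.G_sub_G_eq h) x
  exact sub_nonneg.mp this

/-- The right-hand limit is identified through the fixed-point equation of
`G(·, z) - G(·, z + 1/(k+1))`: its source term is supported on the shrinking intervals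
`(z, z + 1/(k+1)]`, so the monotone limit solves the homogeneous equation and vanishes. -/
lemma tendsto_G_right (h₁ : P.PCLI1) (x z : ℝ) :
    Tendsto (fun k : ℕ => P.G x ↑(z + 1 / ((k : ℝ) + 1))) atTop (𝓝 (P.G x z)) := by
  set zk : ℕ → ℝ := fun k => z + 1 / ((k : ℝ) + 1)
  have hzk : Tendsto zk atTop (𝓝 z) :=
    tendsto_nhds_of_tendsto_nhdsWithin (tendsto_add_one_div_add_one_nhdsGT z)
  have hzk_anti : Antitone zk := fun k l hkl => by
    simp only [zk]; gcongr
  have hz_le : ∀ k, z ≤ zk k := fun k => le_add_of_nonneg_right (by positivity)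
  set D : ℕ → ℝ → ℝ := fun k y => P.G y z - P.G y (zk k)
  have hD_nonneg : ∀ k y, 0 ≤ D k y := fun k y =>
    sub_nonneg.mpr (P.G_antitone h₁ y (hz_le k))
  have hDu : ∀ y, Tendsto (D · y) atTop (𝓝 (⨅ k, D k y)) := fun y =>
    tendsto_atTop_ciInf (fun k l hkl => sub_le_sub_left (P.G_antitone h₁ y (hzk_anti hkl)) _)
      ⟨0, by rintro _ ⟨k, rfl⟩; exact hD_nonneg k y⟩
  have hb : ∀ y, Tendsto (fun k => (Ioc z (zk k)).indicator (fun y => P.g y (zk k)) y) atTop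
      (𝓝 0) := by
    intro y
    have hout : ∀ᶠ k in atTop, y ∉ Ioc z (zk k) := by
      by_cases hy : z < y
      · filter_upwards [hzk.eventually (gt_mem_nhds hy)] with k hk using
          fun h => (h.2.trans_lt hk).false
      · exact Eventually.of_forall fun k h => hy h.1
    exact tendsto_const_nhds.congr' (hout.mono fun k hk => (indicator_of_notMem hk _).symm)
  have hD_le : ∀ k y, |D k y| ≤ 2 * (P.M / (1 - P.γ)) * P.w y := fun k y =>
    P.abs_G_sub_G_le _ _ y
  have hlim_eq := P.eq_add_discounted_of_tendsto (fun k => (P.hG_meas _).sub (P.hG_meas _))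
    hD_le (fun k => P.G_sub_G_eq (hz_le k)) hDu hb
  have hlim_zero := P.abs_le_of_eq_add_discounted (B := 0) (Measurable.iInf fun k =>
      (P.hG_meas _).sub (P.hG_meas _))
    ⟨_, fun y => le_of_tendsto' (hDu y).abs (fun k => hD_le k y)⟩ (by simp) hlim_eq x
  rw [zero_div, zero_mul, abs_nonpos_iff] at hlim_zero
  have hx : Tendsto (D · x) atTop (𝓝 0) := hlim_zero ▸ hDu x
  rw [← sub_zero (P.G x z)]
  exact (tendsto_const_nhds.sub hx).congr fun k => sub_sub_cancel _ _

lemma exists_isLSMeasureOfAnti_G (h₁ : P.PCLI1) (x : ℝ) :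
    ∃ ν : Measure ℝ, IsLocallyFiniteMeasure ν ∧ IsLSMeasureOfAnti (fun z : ℝ => P.G x z) ν := by
  have hmono : Monotone fun t : ℝ => -P.G x t := fun _ _ h => neg_le_neg (P.G_antitone h₁ x h)
  have hright : ∀ z : ℝ, Function.rightLim (fun t : ℝ => -P.G x t) z = -P.G x z := by
    intro z
    exact tendsto_nhds_unique
      ((hmono.tendsto_rightLim z).comp (tendsto_add_one_div_add_one_nhdsGT z))
      (P.tendsto_G_right h₁ x z).neg
  refine ⟨hmono.stieltjesFunction.measure, inferInstance, fun z₁ z₂ _ => ?_⟩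
  rw [StieltjesFunction.measure_Ioc, hmono.stieltjesFunction_eq, hmono.stieltjesFunction_eq,
    hright, hright, neg_sub_neg]

lemma mStar_mul_G_sub_le_F_sub (h₁ : P.PCLI1) (hmono : Monotone P.mStar) (h₃ : P.PCLI3)
    (x : ℝ) {s t : ℝ} (hst : s ≤ t) :
    P.mStar s * (P.G x s - P.G x t) ≤ P.F x s - P.F x t := by
  rcases hst.eq_or_lt with rfl | hst
  · simp
  obtain ⟨ν, _, hν⟩ := P.exists_isLSMeasureOfAnti_G h₁ x
  have hle : ∫ _ in Ioc s t, P.mStar s ∂ν ≤ ∫ z in Ioc s t, P.mStar z ∂ν :=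
    setIntegral_mono_on (integrableOn_const (by simp [hν s t hst.le]))
      ((hmono.locallyIntegrable.integrableOn_isCompact isCompact_Icc).mono_set
        Ioc_subset_Icc_self)
      measurableSet_Ioc fun z hz => hmono hz.1.le
  rw [setIntegral_const, measureReal_def, hν s t hst.le,
    ENNReal.toReal_ofReal (sub_nonneg.mpr (P.G_antitone h₁ x hst.le)), smul_eq_mul] at hle
  linarith [h₃ x ν hν s t hst]

section InitialDistribution

variable {p : Measure ℝ}

lemma abs_Fp_le (hw : Integrable P.w p) (z : EReal) :
    |P.Fp p z| ≤ P.M / (1 - P.γ) * ∫ x, P.w x ∂p := by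
  rw [← integral_const_mul]
  exact norm_integral_le_of_norm_le (f := fun x => P.F x z) (hw.const_mul _)
    (ae_of_all _ (P.abs_F_le z))

lemma abs_Gp_le (hw : Integrable P.w p) (z : EReal) :
    |P.Gp p z| ≤ P.M / (1 - P.γ) * ∫ x, P.w x ∂p := by
  rw [← integral_const_mul]
  exact norm_integral_le_of_norm_le (f := fun x => P.G x z) (hw.const_mul _)
    (ae_of_all _ (P.abs_G_le z))

lemma Gp_antitone (h₁ : P.PCLI1) (hw : Integrable P.w p) : Antitone fun z : ℝ => P.Gp p z :=
  fun _ _ h => integral_mono (P.integrable_G hw _) (P.integrable_G hw _)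
    fun x => P.G_antitone h₁ x h

lemma mStar_mul_Gp_sub_le_Fp_sub (h₁ : P.PCLI1) (hmono : Monotone P.mStar) (h₃ : P.PCLI3)
    (hw : Integrable P.w p) {s t : ℝ} (hst : s ≤ t) :
    P.mStar s * (P.Gp p s - P.Gp p t) ≤ P.Fp p s - P.Fp p t := by
  have hG : Integrable (fun x => P.G x s - P.G x t) p :=
    (P.integrable_G hw s).sub (P.integrable_G hw t)
  have hF : Integrable (fun x => P.F x s - P.F x t) p :=
    (P.integrable_F hw s).sub (P.integrable_F hw t)
  have := integral_mono (hG.const_mul (P.mStar s)) hF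
    fun x => P.mStar_mul_G_sub_le_F_sub h₁ hmono h₃ x hst
  rwa [integral_const_mul, integral_sub (P.integrable_G hw s) (P.integrable_G hw t),
    integral_sub (P.integrable_F hw s) (P.integrable_F hw t)] at this

variable {L : ℝ}

lemma antitone_Fp_add_mul_Gp (h₁ : P.PCLI1) (hmono : Monotone P.mStar) (h₃ : P.PCLI3)
    (hw : Integrable P.w p) (hL₀ : 0 ≤ L) (hL : ∀ z, -L ≤ P.mStar z) :
    Antitone fun z : ℝ => P.Fp p z + (1 + 2 * L) * P.Gp p z := by
  intro s t hst
  have hkey := P.mStar_mul_Gp_sub_le_Fp_sub h₁ hmono h₃ hw hst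
  have hΔ := sub_nonneg.mpr (P.Gp_antitone h₁ hw hst)
  nlinarith [hL s]

/-- On `(s, t]`, `|m*| ≤ m*(t) + 2L ≤ m*(s) + 1 + 2L`, and `m*(s)` times the `ν`-mass
`G(p, s) - G(p, t)` is controlled by `F(p, s) - F(p, t)`. -/
lemma setLIntegral_Ioc_abs_mStar_le_of_le_add_one (h₁ : P.PCLI1) (hmono : Monotone P.mStar)
    (h₃ : P.PCLI3) (hw : Integrable P.w p) (hL₀ : 0 ≤ L) (hL : ∀ z, -L ≤ P.mStar z)
    {ν : Measure ℝ} (hν : IsLSMeasureOfAnti (fun z : ℝ => P.Gp p z) ν) {s t : ℝ} (hst : s ≤ t)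
    (hosc : P.mStar t ≤ P.mStar s + 1) :
    ∫⁻ z in Ioc s t, ENNReal.ofReal |P.mStar z| ∂ν ≤
      ENNReal.ofReal ((P.Fp p s + (1 + 2 * L) * P.Gp p s) -
        (P.Fp p t + (1 + 2 * L) * P.Gp p t)) := by
  have hkey := P.mStar_mul_Gp_sub_le_Fp_sub h₁ hmono h₃ hw hst
  have hΔ := sub_nonneg.mpr (P.Gp_antitone h₁ hw hst)
  calc ∫⁻ z in Ioc s t, ENNReal.ofReal |P.mStar z| ∂ν
      ≤ ∫⁻ _ in Ioc s t, ENNReal.ofReal (P.mStar t + 2 * L) ∂ν := by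
        refine setLIntegral_mono' measurableSet_Ioc fun z hz => ENNReal.ofReal_le_ofReal ?_
        have := hmono hz.2
        rcases abs_cases (P.mStar z) with ⟨h, -⟩ | ⟨h, -⟩ <;> linarith [hL z, hL t]
    _ = ENNReal.ofReal ((P.mStar t + 2 * L) * (P.Gp p s - P.Gp p t)) := by
        rw [setLIntegral_const, hν s t hst, ← ENNReal.ofReal_mul (by linarith [hL t])]
    _ ≤ _ := ENNReal.ofReal_le_ofReal (by nlinarith)

lemma setLIntegral_Ioc_abs_mStar_le (h₁ : P.PCLI1) (hmono : Monotone P.mStar)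
    (hcont : Continuous P.mStar) (h₃ : P.PCLI3) (hw : Integrable P.w p) (hL₀ : 0 ≤ L)
    (hL : ∀ z, -L ≤ P.mStar z) {ν : Measure ℝ}
    (hν : IsLSMeasureOfAnti (fun z : ℝ => P.Gp p z) ν) (a b : ℝ) :
    ∫⁻ z in Ioc a b, ENNReal.ofReal |P.mStar z| ∂ν ≤
      ENNReal.ofReal ((P.Fp p a + (1 + 2 * L) * P.Gp p a) -
        (P.Fp p b + (1 + 2 * L) * P.Gp p b)) := by
  obtain ⟨δ, hδ, hclose⟩ := Metric.uniformContinuousOn_iff.mp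
    ((isCompact_Icc (a := a) (b := b)).uniformContinuousOn_of_continuous hcont.continuousOn)
    1 one_pos
  refine setLIntegral_Ioc_le_of_forall_sub_lt
    (P.antitone_Fp_add_mul_Gp h₁ hmono h₃ hw hL₀ hL) hδ fun s t has hst htb hts =>
      P.setLIntegral_Ioc_abs_mStar_le_of_le_add_one h₁ hmono h₃ hw hL₀ hL hν hst ?_
  have := hclose t ⟨has.trans hst, htb⟩ s ⟨has, hst.trans htb⟩
    (by rw [Real.dist_eq, abs_of_nonneg (sub_nonneg.mpr hst)]; exact hts)
  rw [Real.dist_eq] at this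
  linarith [(abs_lt.mp this).2]

lemma Fp_add_mul_Gp_sub_le (hw : Integrable P.w p) {K : ℝ} (hK : 0 ≤ K) (a b : ℝ) :
    (P.Fp p a + K * P.Gp p a) - (P.Fp p b + K * P.Gp p b) ≤
      2 * (1 + K) * (P.M / (1 - P.γ) * ∫ x, P.w x ∂p) := by
  have hFa := abs_le.mp (P.abs_Fp_le hw a)
  have hFb := abs_le.mp (P.abs_Fp_le hw b)
  have hGa := abs_le.mp (P.abs_Gp_le hw a)
  have hGb := abs_le.mp (P.abs_Gp_le hw b)
  nlinarith

end InitialDistribution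

end Bandit

/-- Under PCL-indexability, the MP index `m*` is integrable with respect to the
Lebesgue–Stieltjes measure of `G(p,·)`. -/
theorem mpIndex_integrable (P : Bandit) (h : P.PCLIndexable)
    (p : Measure ℝ) (hp : P.IsInitDist p)
    (ν : Measure ℝ) (hν : IsLSMeasureOfAnti (fun z : ℝ => P.Gp p z) ν) :
    ∫⁻ z, ENNReal.ofReal |P.mStar z| ∂ν < ⊤ := by
  obtain ⟨h₁, ⟨hmono, hcont, ℓ, hℓ⟩, h₃⟩ := h
  obtain ⟨L, hL₀, hL⟩ : ∃ L, 0 ≤ L ∧ ∀ z, -L ≤ P.mStar z :=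
    ⟨max (-ℓ) 0, le_max_right _ _, fun z => by linarith [hℓ ⟨z, rfl⟩, le_max_left (-ℓ) 0]⟩
  refine (lintegral_le_of_forall_setLIntegral_Ioc_le fun a b =>
    (P.setLIntegral_Ioc_abs_mStar_le h₁ hmono hcont h₃ hp.2 hL₀ hL hν a b).trans
      (ENNReal.ofReal_le_ofReal (P.Fp_add_mul_Gp_sub_le hp.2 (by linarith) a b))).trans_lt
    ENNReal.ofReal_lt_top
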